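/- Reduction correctness for strong NP-hardness with non-fixed n. Fix a rational d ≥ 0. Let m′ ≥ 1 and n = ⌈2(m′+d)⌉. Let X₁ be a list of 3m′ positive integers, let M be the rational number such that the sum of X₁ equals m′·n·(1 − d/(n−m′))·M, assume n·M is a positive integer and every element of X₁ is at most n(1 − d/(n−m′))·M. Let X₂ be obtained from X₁ by replacing each element x by nM − x, and let X₃ consist of X₂ together with 2(n−m′) additional jobs of length nM. Let S = (Σ_{x∈X₃} x)/n. Then X₁ can be partitioned into m′ triples each of sum n(1 − d/(n−m′))·M if and only if X₃ admits an integral partition among n identical machines with makespan at most S + d·M. -/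

import Mathlib

/-! With `K = nM` and `c = n(1 - d/(n - m'))M` the target triple sum, the threshold `S + dM`
equals `3K - c`, because `(n - m')(K - c) = dK`. A partition into triples gives a schedule: machine
`k < m'` runs the three inverted jobs of triple `k` (load `3K - c`), every other machine two jobs
of length `K` (load `2K ≤ 3K - c`).

Conversely, let a machine carry `A` jobs of length `K` and `B` inverted jobs whose originals sum
to `X`. The load bound forces `X ≥ (A + B - 2)c`; both sides sum to `m'c` over all machines, so
equality holds on each one, and together with `X ≥ B` this excludes every `(A, B)` with
`3A + 2B < 6`. Since `3A + 2B` sums to `6n`, every machine is of type `(0, 3)` with `X = c` or of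
type `(2, 0)`, and the machines of the first type are the triples. -/

/-- The job lengths of the instance `X₃`: the inverted jobs `nM - x` (encoded with `K = nM`)
together with `2*(n-m')` jobs of length `K`. -/
def x3jobs (m' K : ℕ) (x1 : Fin (3 * m') → ℕ) (n : ℕ) :
    (Fin (3 * m') ⊕ Fin (2 * (n - m'))) → ℕ :=
  Sum.elim (fun j => K - x1 j) (fun _ => K)

open Finset

section MachineTypes

variable {A B : ℕ} {X c K : ℚ}

lemma sub_two_mul_le_of_load_le (hc : 0 ≤ c) (hcK : c ≤ K) (hXB : (B : ℚ) ≤ X)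
    (hload : ((A : ℚ) + B) * K - X ≤ 3 * K - c) : ((A : ℚ) + B - 2) * c ≤ X := by
  rcases le_or_gt 3 (A + B) with h | h
  · have h' : (3 : ℚ) ≤ A + B := by exact_mod_cast h
    nlinarith
  · have h' : (A : ℚ) + B ≤ 2 := by exact_mod_cast (by omega : A + B ≤ 2)
    nlinarith [(Nat.cast_nonneg B : (0 : ℚ) ≤ B)]

lemma six_le_of_eq_sub_two_mul (hc : 0 < c) (hXB : (B : ℚ) ≤ X)
    (hX : X = ((A : ℚ) + B - 2) * c) : 6 ≤ 3 * A + 2 * B := by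
  by_contra! h
  have hA : A < 2 := by omega
  have hB : B < 3 := by omega
  interval_cases A <;> interval_cases B <;> push_cast at hX hXB <;> linarith

theorem triple_or_pair_of_load_le {μ : Type*} [Fintype μ] {m : ℕ} {A B : μ → ℕ} {X : μ → ℚ}
    (hc : 0 < c) (hcK : c ≤ K) (hXB : ∀ i, (B i : ℚ) ≤ X i)
    (hload : ∀ i, ((A i : ℚ) + B i) * K - X i ≤ 3 * K - c)
    (hA : ∑ i, A i + 2 * m = 2 * Fintype.card μ) (hB : ∑ i, B i = 3 * m)
    (hX : ∑ i, X i = m * c) :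
    ∀ i, (A i = 0 ∧ B i = 3 ∧ X i = c) ∨ (A i = 2 ∧ B i = 0) := by
  have hXeq : ∀ i, X i = ((A i : ℚ) + B i - 2) * c := by
    have hA' : ∑ i, (A i : ℚ) + 2 * m = 2 * Fintype.card μ := by exact_mod_cast hA
    have hB' : ∑ i, (B i : ℚ) = 3 * m := by exact_mod_cast hB
    have hsum : ∑ i, ((A i : ℚ) + B i - 2) * c = ∑ i, X i := by
      simp only [← sum_mul, sum_sub_distrib, sum_add_distrib, sum_const, card_univ,
        nsmul_eq_mul, hX]
      linear_combination c * (hA' + hB')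
    intro i
    exact ((sum_eq_sum_iff_of_le fun i _ => sub_two_mul_le_of_load_le hc.le hcK (hXB i)
      (hload i)).mp hsum i (mem_univ i)).symm
  have h6 : ∀ i, 3 * A i + 2 * B i = 6 := by
    have hsum : ∑ _i : μ, 6 = ∑ i, (3 * A i + 2 * B i) := by
      simp only [sum_add_distrib, ← mul_sum, hB, sum_const, card_univ, smul_eq_mul]
      omega
    intro i
    exact ((sum_eq_sum_iff_of_le fun i _ => six_le_of_eq_sub_two_mul hc (hXB i)
      (hXeq i)).mp hsum i (mem_univ i)).symm
  intro i
  have h6i := h6 i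
  rcases (by omega : (A i = 0 ∧ B i = 3) ∨ (A i = 2 ∧ B i = 0)) with ⟨hA0, hB3⟩ | h
  · refine Or.inl ⟨hA0, hB3, ?_⟩
    rw [hXeq i, hA0, hB3]
    norm_num
  · exact Or.inr h

end MachineTypes

theorem exists_triples_of_fibers {ι μ : Type*} [Fintype ι] [DecidableEq μ] {m : ℕ} {c : ℚ}
    (f : ι → μ) (x : ι → ℚ) (hι : Fintype.card ι = 3 * m)
    (hf : ∀ i ∈ univ.image f, #{j | f j = i} = 3 ∧ ∑ j ∈ univ.filter (f · = i), x j = c) :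
    ∃ Q : ι → Fin m, (∀ k, #{j | Q j = k} = 3) ∧ ∀ k, ∑ j ∈ univ.filter (Q · = k), x j = c := by
  have hcard : #(univ.image f) = m := by
    have h := card_eq_sum_card_image f univ
    rw [sum_congr rfl fun i hi => (hf i hi).1, sum_const, smul_eq_mul, card_univ, hι] at h
    omega
  let e := equivFinOfCardEq hcard
  have hfiber : ∀ k, univ.filter (fun j => e ⟨f j, mem_image_of_mem f (mem_univ j)⟩ = k)
      = univ.filter (f · = e.symm k) := fun k => by
    ext j
    simp [← Equiv.eq_symm_apply, ← Subtype.val_inj]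
  refine ⟨fun j => e ⟨f j, mem_image_of_mem f (mem_univ j)⟩, fun k => ?_, fun k => ?_⟩
  · rw [hfiber]; exact (hf _ (e.symm k).2).1
  · rw [hfiber]; exact (hf _ (e.symm k).2).2

section Reduction

variable {m n K : ℕ} {x : Fin (3 * m) → ℕ}

lemma cast_x3jobs_inl (hxK : ∀ j, x j ≤ K) (j : Fin (3 * m)) :
    (x3jobs m K x n (.inl j) : ℚ) = K - x j := by
  simp [x3jobs, Nat.cast_sub (hxK j)]

lemma x3jobs_inr (k : Fin (2 * (n - m))) : x3jobs m K x n (.inr k) = K := rfl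

lemma sum_x3jobs (hmn : m ≤ n) (hxK : ∀ j, x j ≤ K) :
    ∑ j, (x3jobs m K x n j : ℚ) = (3 * m + 2 * ((n : ℚ) - m)) * K - ∑ j, (x j : ℚ) := by
  simp only [Fintype.sum_sum_type, cast_x3jobs_inl hxK, sum_sub_distrib, x3jobs_inr,
    sum_const, card_univ, Fintype.card_fin, nsmul_eq_mul]
  push_cast [hmn]
  ring

lemma sum_x3jobs_fiber {μ : Type*} [DecidableEq μ] (hxK : ∀ j, x j ≤ K)
    (P : Fin (3 * m) ⊕ Fin (2 * (n - m)) → μ) (i : μ) :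
    ∑ j ∈ univ.filter (P · = i), (x3jobs m K x n j : ℚ)
      = ((#{k | P (.inr k) = i} : ℚ) + #{j | P (.inl j) = i}) * K
        - ∑ j ∈ univ.filter (fun j => P (.inl j) = i), (x j : ℚ) := by
  rw [sum_filter, Fintype.sum_sum_type, ← sum_filter, ← sum_filter]
  simp only [cast_x3jobs_inl hxK, sum_sub_distrib, x3jobs_inr, sum_const, nsmul_eq_mul]
  ring

def tripleSchedule (hmn : m ≤ n) (Q : Fin (3 * m) → Fin m) :
    Fin (3 * m) ⊕ Fin (2 * (n - m)) → Fin n :=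
  Sum.elim (fun j => Fin.castLE hmn (Q j)) (fun k => ⟨m + k / 2, by omega⟩)

lemma tripleSchedule_load_le {c : ℚ} (hmn : m ≤ n) (hxK : ∀ j, x j ≤ K) (hcK : c ≤ K)
    (Q : Fin (3 * m) → Fin m) (hQ3 : ∀ k, #{j | Q j = k} = 3)
    (hQc : ∀ k, ∑ j ∈ univ.filter (Q · = k), (x j : ℚ) = c) (i : Fin n) :
    ∑ j ∈ univ.filter (tripleSchedule hmn Q · = i), (x3jobs m K x n j : ℚ) ≤ 3 * K - c := by
  rw [sum_x3jobs_fiber hxK]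
  by_cases hi : (i : ℕ) < m
  · have hbig : univ.filter (fun k => tripleSchedule hmn Q (.inr k) = i) = ∅ := by
      ext k; simp [tripleSchedule, Fin.ext_iff]; omega
    have hsmall : univ.filter (fun j => tripleSchedule hmn Q (.inl j) = i)
        = univ.filter (Q · = ⟨i, hi⟩) := by
      ext j; simp [tripleSchedule, Fin.ext_iff]
    rw [hbig, hsmall, hQ3, hQc]
    simp
  · have hbig : univ.filter (fun k => tripleSchedule hmn Q (.inr k) = i)
        = {⟨2 * (i - m), by omega⟩, ⟨2 * (i - m) + 1, by omega⟩} := by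
      ext k; simp [tripleSchedule, Fin.ext_iff]; omega
    have hsmall : univ.filter (fun j => tripleSchedule hmn Q (.inl j) = i) = ∅ := by
      ext j; simp [tripleSchedule, Fin.ext_iff]; omega
    rw [hbig, hsmall, card_pair (by simp [Fin.ext_iff])]
    simp only [card_empty, sum_empty, Nat.cast_zero, Nat.cast_ofNat]
    linarith

theorem exists_triples_iff_exists_schedule_load_le {c : ℚ} (hmn : m ≤ n) (hx : ∀ j, 0 < x j)
    (hc : 0 < c) (hxc : ∀ j, (x j : ℚ) ≤ c) (hcK : c ≤ K) (hsum : ∑ j, (x j : ℚ) = m * c) :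
    (∃ Q : Fin (3 * m) → Fin m,
        (∀ k, #{j | Q j = k} = 3) ∧ ∀ k, ∑ j ∈ univ.filter (Q · = k), (x j : ℚ) = c) ↔
      ∃ P : Fin (3 * m) ⊕ Fin (2 * (n - m)) → Fin n,
        ∀ i, ∑ j ∈ univ.filter (P · = i), (x3jobs m K x n j : ℚ) ≤ 3 * K - c := by
  have hxK : ∀ j, x j ≤ K := fun j => by exact_mod_cast (hxc j).trans hcK
  constructor
  · rintro ⟨Q, hQ3, hQc⟩
    exact ⟨tripleSchedule hmn Q, tripleSchedule_load_le hmn hxK hcK Q hQ3 hQc⟩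
  rintro ⟨P, hP⟩
  have hXB : ∀ i, (#{j | P (.inl j) = i} : ℚ)
      ≤ ∑ j ∈ univ.filter (fun j => P (.inl j) = i), (x j : ℚ) := fun i => by
    simpa using card_nsmul_le_sum _ (fun j => (x j : ℚ)) 1 fun j _ => by exact_mod_cast hx j
  have hload : ∀ i, ((#{k | P (.inr k) = i} : ℚ) + #{j | P (.inl j) = i}) * K
      - ∑ j ∈ univ.filter (fun j => P (.inl j) = i), (x j : ℚ) ≤ 3 * K - c := fun i => by
    rw [← sum_x3jobs_fiber hxK]
    exact hP i
  have hA : ∑ i, #{k | P (.inr k) = i} + 2 * m = 2 * Fintype.card (Fin n) := by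
    rw [← card_eq_sum_card_fiberwise fun _ _ => mem_univ _]
    simp only [card_univ, Fintype.card_fin]
    omega
  have hB : ∑ i, #{j | P (.inl j) = i} = 3 * m := by
    rw [← card_eq_sum_card_fiberwise fun _ _ => mem_univ _]
    simp
  have hX : ∑ i, ∑ j ∈ univ.filter (fun j => P (.inl j) = i), (x j : ℚ) = m * c := by
    rw [sum_fiberwise, hsum]
  have htypes := triple_or_pair_of_load_le hc hcK hXB hload hA hB hX
  refine exists_triples_of_fibers (P <| .inl ·) _ (by simp) fun i hi => ?_
  obtain ⟨j, -, rfl⟩ := mem_image.mp hi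
  rcases htypes (P (.inl j)) with ⟨-, h3, hXc⟩ | ⟨-, h0⟩
  · exact ⟨h3, hXc⟩
  · exact (filter_eq_empty_iff.mp (card_eq_zero.mp h0) (mem_univ j) rfl).elim

end Reduction

theorem stmt_14_general (d : ℚ) (hd : 0 ≤ d) (m' : ℕ) (hm' : 1 ≤ m')
    (n : ℕ) (hn : (n : ℤ) = ⌈2 * ((m' : ℚ) + d)⌉)
    (x1 : Fin (3 * m') → ℕ) (hx1 : ∀ j, 0 < x1 j)
    (M : ℚ)
    (hsum : (∑ j, (x1 j : ℚ)) = (m' : ℚ) * (n : ℚ) * (1 - d / ((n : ℚ) - (m' : ℚ))) * M)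
    (K : ℕ) (hKM : (K : ℚ) = (n : ℚ) * M)
    (hbound : ∀ j, (x1 j : ℚ) ≤ (n : ℚ) * (1 - d / ((n : ℚ) - (m' : ℚ))) * M) :
    (∃ Q : Fin (3 * m') → Fin m',
        (∀ k, (Finset.univ.filter (fun j => Q j = k)).card = 3) ∧
        (∀ k, (∑ j ∈ Finset.univ.filter (fun j => Q j = k), (x1 j : ℚ))
            = (n : ℚ) * (1 - d / ((n : ℚ) - (m' : ℚ))) * M)) ↔
    (∃ P : (Fin (3 * m') ⊕ Fin (2 * (n - m'))) → Fin n,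
        ∀ i : Fin n,
          (∑ j ∈ Finset.univ.filter (fun j => P j = i), (x3jobs m' K x1 n j : ℚ))
            ≤ (∑ j : Fin (3 * m') ⊕ Fin (2 * (n - m')), (x3jobs m' K x1 n j : ℚ)) / (n : ℚ)
              + d * M) := by
  set c := (n : ℚ) * (1 - d / ((n : ℚ) - (m' : ℚ))) * M with hc_def
  have hmn : m' < n := by
    have h2 : 2 * ((m' : ℚ) + d) ≤ n := by exact_mod_cast hn ▸ Int.le_ceil _
    have h1 : (1 : ℚ) ≤ m' := by exact_mod_cast hm'
    exact_mod_cast (by linarith : (m' : ℚ) < n)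
  have hgap_pos : (0 : ℚ) < n - m' := sub_pos.mpr (by exact_mod_cast hmn)
  have hgap : ((n : ℚ) - m') * (K - c) = d * K := by
    rw [hc_def, hKM]
    field_simp
    ring
  have hcK : c ≤ K :=
    sub_nonneg.mp ((mul_nonneg_iff_of_pos_left hgap_pos).mp (hgap ▸ by positivity))
  have hc : 0 < c := (Nat.cast_pos.mpr (hx1 ⟨0, by omega⟩)).trans_le (hbound ⟨0, by omega⟩)
  have hsum' : ∑ j, (x1 j : ℚ) = m' * c := by rw [hsum, hc_def]; ring
  have hthreshold : (∑ j, (x3jobs m' K x1 n j : ℚ)) / n + d * M = 3 * K - c := by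
    have hn0 : (n : ℚ) ≠ 0 := Nat.cast_ne_zero.mpr (by omega)
    rw [sum_x3jobs hmn.le fun j => by exact_mod_cast (hbound j).trans hcK, hsum',
      div_add' _ _ _ hn0, div_eq_iff hn0]
    linear_combination -hgap - d * hKM
  simp_rw [hthreshold]
  exact exists_triples_iff_exists_schedule_load_le hmn.le hx1 hc hbound hcK hsum'

/-- reduction correctness for strong NP-hardness with non-fixed `n`:
`X₁` can be partitioned into `m'` triples of equal sum `n(1 - d/(n-m'))·M` iff `X₃` admits an
integral partition among `n = ⌈2(m'+d)⌉` identical machines with makespan at most `S + d·M`. -/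
theorem stmt_14 (d : ℚ) (hd : 0 ≤ d) (m' : ℕ) (hm' : 1 ≤ m')
    (n : ℕ) (hn : (n : ℤ) = ⌈2 * ((m' : ℚ) + d)⌉)
    (x1 : Fin (3 * m') → ℕ) (hx1 : ∀ j, 0 < x1 j)
    (M : ℚ)
    (hsum : (∑ j, (x1 j : ℚ)) = (m' : ℚ) * (n : ℚ) * (1 - d / ((n : ℚ) - (m' : ℚ))) * M)
    (K : ℕ) (hK : 0 < K) (hKM : (K : ℚ) = (n : ℚ) * M)
    (hbound : ∀ j, (x1 j : ℚ) ≤ (n : ℚ) * (1 - d / ((n : ℚ) - (m' : ℚ))) * M) :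
    (∃ Q : Fin (3 * m') → Fin m',
        (∀ k, (Finset.univ.filter (fun j => Q j = k)).card = 3) ∧
        (∀ k, (∑ j ∈ Finset.univ.filter (fun j => Q j = k), (x1 j : ℚ))
            = (n : ℚ) * (1 - d / ((n : ℚ) - (m' : ℚ))) * M)) ↔
    (∃ P : (Fin (3 * m') ⊕ Fin (2 * (n - m'))) → Fin n,
        ∀ i : Fin n,
          (∑ j ∈ Finset.univ.filter (fun j => P j = i), (x3jobs m' K x1 n j : ℚ))
            ≤ (∑ j : Fin (3 * m') ⊕ Fin (2 * (n - m')), (x3jobs m' K x1 n j : ℚ)) / (n : ℚ)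
              + d * M) :=
  stmt_14_general d hd m' hm' n hn x1 hx1 M hsum K hKM hbound
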